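/- arXiv:1907.04727 — 2 statements merged into one kernel-verified Lean document; each statement's English description precedes it below -/
import Mathlib

section
/- If the vertex set of a finite directed hypergraph can be partitioned into a source set A and a sink set B so that every vertex of A has outgoing hyperedges but no incoming hyperedges, and every vertex of B has incoming hyperedges but no outgoing hyperedges, then every hyperedge has Ollivier Ricci curvature 0 (the hypergraph is Ricci flat). -/
/-!
For a hyperedge `e : S → T` the tail `S` lies in the source set and the head `T` in the sink
set, so no hyperedge enters `S` or leaves `T`. Hence `μ_{S^in}` and `μ_{T^out}` are the uniform
measures on `S` and `T`. Each vertex of `S` is one step from each vertex of `T` through `e`, so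
every coupling of the two measures transports all of the unit mass exactly one step: `W = 1`,
and the curvature `1 - W` vanishes.
-/

open scoped ENNReal BigOperators

/-- A finite directed hypergraph: a finite collection of directed hyperedges,
each consisting of a tail set and a head set of vertices. -/
structure DirectedHypergraph (V : Type) where
  edges : Finset (Finset V × Finset V)

namespace DirectedHypergraph

variable {V : Type} [Fintype V] [DecidableEq V] (H : DirectedHypergraph V)

/-- One directed step: some hyperedge has `u` in its tail and `v` in its head. -/
def Step (u v : V) : Prop := ∃ e ∈ H.edges, u ∈ e.1 ∧ v ∈ e.2

/-- Existence of a directed path of a given number of hyperedge-steps. -/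
def PathLen (H : DirectedHypergraph V) : ℕ → V → V → Prop
  | 0, u, v => u = v
  | n + 1, u, v => ∃ w, H.Step u w ∧ PathLen H n w v

/-- Directed shortest-path distance: the minimal number of hyperedges along a
directed path from `u` to `v` (`⊤` if there is none), valued in `ℝ≥0∞`. -/
noncomputable def dist (u v : V) : ℝ≥0∞ :=
  sInf {n : ℝ≥0∞ | ∃ m : ℕ, n = m ∧ H.PathLen m u v}

/-- Number of incoming hyperedges to a vertex. -/
def dIn (x : V) : ℕ := (H.edges.filter fun e => x ∈ e.2).card

/-- Number of outgoing hyperedges from a vertex. -/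
def dOut (x : V) : ℕ := (H.edges.filter fun e => x ∈ e.1).card

/-- The in-measure `μ_{A^in}` associated to a tail set `A`. -/
noncomputable def muIn (A : Finset V) (z : V) : ℝ≥0∞ :=
  ∑ x ∈ A,
    if z = x then (if H.dIn x = 0 then (A.card : ℝ≥0∞)⁻¹ else 0)
    else ∑ e ∈ H.edges.filter (fun e => z ∈ e.1 ∧ x ∈ e.2),
      ((A.card * H.dIn x * e.1.card : ℕ) : ℝ≥0∞)⁻¹

/-- The out-measure `μ_{B^out}` associated to a head set `B`. -/
noncomputable def muOut (B : Finset V) (z : V) : ℝ≥0∞ :=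
  ∑ y ∈ B,
    if z = y then (if H.dOut y = 0 then (B.card : ℝ≥0∞)⁻¹ else 0)
    else ∑ e ∈ H.edges.filter (fun e => y ∈ e.1 ∧ z ∈ e.2),
      ((B.card * H.dOut y * e.2.card : ℕ) : ℝ≥0∞)⁻¹

/-- A coupling of two (discrete) measures on `V`. -/
def IsCoupling (μ ν : V → ℝ≥0∞) (ε : V → V → ℝ≥0∞) : Prop :=
  (∀ u, ∑ v, ε u v = μ u) ∧ (∀ v, ∑ u, ε u v = ν v)

/-- Transport cost of a plan with respect to the directed distance. -/
noncomputable def cost (ε : V → V → ℝ≥0∞) : ℝ≥0∞ :=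
  ∑ u, ∑ v, H.dist u v * ε u v

/-- Wasserstein distance: infimum of transport cost over all couplings. -/
noncomputable def W (μ ν : V → ℝ≥0∞) : ℝ≥0∞ :=
  ⨅ ε : {ε : V → V → ℝ≥0∞ // IsCoupling μ ν ε}, H.cost ε.1

/-- Ollivier Ricci curvature of a directed hyperedge `e : A → B`. -/
noncomputable def kappa (e : Finset V × Finset V) : ℝ :=
  1 - (H.W (H.muIn e.1) (H.muOut e.2)).toReal

/-- A directed path from `u` to `v`, recorded by its (nonempty) list of
successive vertices after `u`, ending at `v`. -/
def IsDipath (u v : V) (p : List V) : Prop :=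
  p ≠ [] ∧ List.Chain H.Step u p ∧ p.getLast? = some v

/-- A directed hypertree: loopless, at most one directed path between any two
vertices, and no directed cycles. -/
def IsHypertree : Prop :=
  (∀ e ∈ H.edges, ∀ x, ¬(x ∈ e.1 ∧ x ∈ e.2)) ∧
  (∀ u v p q, H.IsDipath u v p → H.IsDipath u v q → p = q) ∧
  (∀ u p, ¬H.IsDipath u u p)

end DirectedHypergraph

open DirectedHypergraph

variable {V : Type} [Fintype V] [DecidableEq V]

theorem sum_ite_mem_inv_card {S : Finset V} (hS : S.Nonempty) :
    ∑ z, (if z ∈ S then (S.card : ℝ≥0∞)⁻¹ else 0) = 1 := by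
  rw [Finset.sum_ite_mem, Finset.univ_inter, Finset.sum_const, nsmul_eq_mul,
    ENNReal.mul_inv_cancel (by simpa using hS.ne_empty) (ENNReal.natCast_ne_top _)]

namespace DirectedHypergraph

section Distance

variable {V : Type} (H : DirectedHypergraph V)

theorem dist_eq_one_of_step {u v : V} (h : H.Step u v) (huv : u ≠ v) : H.dist u v = 1 := by
  refine le_antisymm (sInf_le ⟨1, by norm_num, v, h, rfl⟩) (le_sInf ?_)
  rintro _ ⟨_ | m, rfl, hp⟩
  · exact absurd hp huv
  · exact_mod_cast m.succ_pos

end Distance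

section Degree

variable {V : Type} [DecidableEq V] (H : DirectedHypergraph V)

theorem dIn_eq_zero_iff {x : V} : H.dIn x = 0 ↔ ∀ e ∈ H.edges, x ∉ e.2 := by
  simp [dIn, Finset.filter_eq_empty_iff]

theorem dOut_eq_zero_iff {x : V} : H.dOut x = 0 ↔ ∀ e ∈ H.edges, x ∉ e.1 := by
  simp [dOut, Finset.filter_eq_empty_iff]

theorem muIn_of_forall_dIn_eq_zero {S : Finset V} (hS : ∀ x ∈ S, H.dIn x = 0) (z : V) :
    H.muIn S z = if z ∈ S then (S.card : ℝ≥0∞)⁻¹ else 0 := by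
  rw [muIn, ← Finset.sum_ite_eq S z fun _ => (S.card : ℝ≥0∞)⁻¹]
  refine Finset.sum_congr rfl fun x hx => ?_
  by_cases hzx : z = x
  · simp [hzx, hS x hx]
  · have hx : ∀ e ∈ H.edges, x ∉ e.2 := H.dIn_eq_zero_iff.1 (hS x hx)
    rw [if_neg hzx, if_neg hzx, Finset.filter_eq_empty_iff.2 fun e he h => hx e he h.2,
      Finset.sum_empty]

theorem muOut_of_forall_dOut_eq_zero {T : Finset V} (hT : ∀ y ∈ T, H.dOut y = 0) (z : V) :
    H.muOut T z = if z ∈ T then (T.card : ℝ≥0∞)⁻¹ else 0 := by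
  rw [muOut, ← Finset.sum_ite_eq T z fun _ => (T.card : ℝ≥0∞)⁻¹]
  refine Finset.sum_congr rfl fun y hy => ?_
  by_cases hzy : z = y
  · simp [hzy, hT y hy]
  · have hy : ∀ e ∈ H.edges, y ∉ e.1 := H.dOut_eq_zero_iff.1 (hT y hy)
    rw [if_neg hzy, if_neg hzy, Finset.filter_eq_empty_iff.2 fun e he h => hy e he h.1,
      Finset.sum_empty]

end Degree

section Transport

variable {V : Type} [Fintype V] (H : DirectedHypergraph V)
  {μ ν : V → ℝ≥0∞} {ε : V → V → ℝ≥0∞}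

theorem IsCoupling.left_ne_zero (h : IsCoupling μ ν ε) {u v : V} (huv : ε u v ≠ 0) :
    μ u ≠ 0 := by
  rw [← h.1 u]
  exact fun h0 => huv (Finset.sum_eq_zero_iff.1 h0 v (Finset.mem_univ v))

theorem IsCoupling.right_ne_zero (h : IsCoupling μ ν ε) {u v : V} (huv : ε u v ≠ 0) :
    ν v ≠ 0 := by
  rw [← h.2 v]
  exact fun h0 => huv (Finset.sum_eq_zero_iff.1 h0 u (Finset.mem_univ u))

theorem isCoupling_mul (hμ : ∑ u, μ u = 1) (hν : ∑ v, ν v = 1) :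
    IsCoupling μ ν fun u v => μ u * ν v :=
  ⟨fun u => by rw [← Finset.mul_sum, hν, mul_one], fun v => by rw [← Finset.sum_mul, hμ, one_mul]⟩

theorem cost_eq_sum_of_dist_eq_one (h : ∀ u v, ε u v ≠ 0 → H.dist u v = 1) :
    H.cost ε = ∑ u, ∑ v, ε u v := by
  refine Finset.sum_congr rfl fun u _ => Finset.sum_congr rfl fun v _ => ?_
  by_cases huv : ε u v = 0
  · rw [huv, mul_zero]
  · rw [h u v huv, one_mul]

theorem W_eq_one (hμ : ∑ u, μ u = 1) (hν : ∑ v, ν v = 1)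
    (hdist : ∀ u v, μ u ≠ 0 → ν v ≠ 0 → H.dist u v = 1) : H.W μ ν = 1 := by
  have hcost : ∀ ε : {ε // IsCoupling μ ν ε}, H.cost ε.1 = 1 := fun ⟨ε, hε⟩ => by
    rw [H.cost_eq_sum_of_dist_eq_one fun u v huv =>
        hdist u v (hε.left_ne_zero huv) (hε.right_ne_zero huv),
      Finset.sum_congr rfl fun u _ => hε.1 u, hμ]
  have : Nonempty {ε // IsCoupling μ ν ε} := ⟨⟨_, isCoupling_mul hμ hν⟩⟩
  simp only [W, hcost, iInf_const]

end Transport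

end DirectedHypergraph

theorem ricci_flat_of_source_sink_general
    (H : DirectedHypergraph V) (A B : Finset V)
    (hcover : A ∪ B = Finset.univ)
    (hsrc : ∀ x ∈ A, H.dOut x ≠ 0 ∧ H.dIn x = 0)
    (hsink : ∀ y ∈ B, H.dIn y ≠ 0 ∧ H.dOut y = 0)
    (hne : ∀ e ∈ H.edges, e.1.Nonempty ∧ e.2.Nonempty) :
    ∀ e ∈ H.edges, H.kappa e = 0 := by
  intro e he
  have hAB (x : V) : x ∈ A ∨ x ∈ B := Finset.mem_union.1 (hcover ▸ Finset.mem_univ x)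
  have htail : ∀ x ∈ e.1, H.dIn x = 0 := fun x hx =>
    (hAB x).elim (fun hA => (hsrc x hA).2)
      fun hB => absurd hx (H.dOut_eq_zero_iff.1 (hsink x hB).2 e he)
  have hhead : ∀ y ∈ e.2, H.dOut y = 0 := fun y hy =>
    (hAB y).elim (fun hA => absurd hy (H.dIn_eq_zero_iff.1 (hsrc y hA).2 e he))
      fun hB => (hsink y hB).2
  have hW : H.W (H.muIn e.1) (H.muOut e.2) = 1 := by
    rw [funext (H.muIn_of_forall_dIn_eq_zero htail),
      funext (H.muOut_of_forall_dOut_eq_zero hhead)]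
    refine H.W_eq_one (sum_ite_mem_inv_card (hne e he).1) (sum_ite_mem_inv_card (hne e he).2)
      fun u v hu hv => ?_
    have hu : u ∈ e.1 := by by_contra h; exact hu (if_neg h)
    have hv : v ∈ e.2 := by by_contra h; exact hv (if_neg h)
    -- `u` has no incoming hyperedge while `v` has one, so the step `u → v` is not a loop
    exact H.dist_eq_one_of_step ⟨e, he, hu, hv⟩
      fun huv => H.dIn_eq_zero_iff.1 (htail u hu) e he (huv ▸ hv)
  simp [kappa, hW]

/-- If the vertex set splits into a source set `A` (outgoing but no incoming
hyperedges) and a sink set `B` (incoming but no outgoing hyperedges), then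
every hyperedge has curvature 0. -/
theorem ricci_flat_of_source_sink
    (H : DirectedHypergraph V) (A B : Finset V)
    (hdisj : Disjoint A B) (hcover : A ∪ B = Finset.univ)
    (hsrc : ∀ x ∈ A, H.dOut x ≠ 0 ∧ H.dIn x = 0)
    (hsink : ∀ y ∈ B, H.dIn y ≠ 0 ∧ H.dOut y = 0)
    (hne : ∀ e ∈ H.edges, e.1.Nonempty ∧ e.2.Nonempty) :
    ∀ e ∈ H.edges, H.kappa e = 0 :=
  ricci_flat_of_source_sink_general H A B hcover hsrc hsink hne
end

section
/- If the vertex set of a finite directed hypergraph is partitioned into four sets A, B, C, D such that every vertex of D is connected by a directed (hyper)edge to every vertex of A, every vertex of A to every vertex of B, every vertex of B to every vertex of C, and every vertex of C to every vertex of D, with no other connections (cyclic 4-partite full connection), then every hyperedge has Ollivier Ricci curvature −2. -/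
open scoped ENNReal BigOperators

open DirectedHypergraph

variable {V : Type} [Fintype V] [DecidableEq V]

section Aux

variable {V : Type} [Fintype V] [DecidableEq V]

open Fin.NatCast

lemma step_part (H : DirectedHypergraph V) (P : Fin 4 → Finset V)
    (hdisj : ∀ i j : Fin 4, i ≠ j → Disjoint (P i) (P j))
    (hstep : ∀ u v, H.Step u v ↔ ∃ i, u ∈ P i ∧ v ∈ P (i + 1))
    {u v : V} (h : H.Step u v) {i : Fin 4} (hu : u ∈ P i) : v ∈ P (i + 1) := by
  rcases (hstep u v).1 h with ⟨j, hj1, hj2⟩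
  have hji : j = i := by
    by_contra hij
    exact Finset.disjoint_left.1 (hdisj j i hij) hj1 hu
  subst hji; exact hj2

lemma step_part_rev (H : DirectedHypergraph V) (P : Fin 4 → Finset V)
    (hdisj : ∀ i j : Fin 4, i ≠ j → Disjoint (P i) (P j))
    (hstep : ∀ u v, H.Step u v ↔ ∃ i, u ∈ P i ∧ v ∈ P (i + 1))
    {u v : V} (h : H.Step u v) {i : Fin 4} (hv : v ∈ P i) : u ∈ P (i + 3) := by
  rcases (hstep u v).1 h with ⟨j, hj1, hj2⟩
  have hji : j + 1 = i := by
    by_contra hij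
    exact Finset.disjoint_left.1 (hdisj _ _ hij) hj2 hv
  have : j = i + 3 := by omega
  subst this; exact hj1

lemma no_self_step (H : DirectedHypergraph V) (P : Fin 4 → Finset V)
    (hdisj : ∀ i j : Fin 4, i ≠ j → Disjoint (P i) (P j))
    (hstep : ∀ u v, H.Step u v ↔ ∃ i, u ∈ P i ∧ v ∈ P (i + 1))
    (u : V) : ¬ H.Step u u := by
  intro h
  rcases (hstep u u).1 h with ⟨j, hj1, hj2⟩
  exact Finset.disjoint_left.1 (hdisj j (j + 1) (by omega)) hj1 hj2

lemma pathlen_part (H : DirectedHypergraph V) (P : Fin 4 → Finset V)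
    (hdisj : ∀ i j : Fin 4, i ≠ j → Disjoint (P i) (P j))
    (hstep : ∀ u v, H.Step u v ↔ ∃ i, u ∈ P i ∧ v ∈ P (i + 1)) :
    ∀ (n : ℕ) (u v : V) (i : Fin 4), H.PathLen n u v → u ∈ P i → v ∈ P (i + n) := by
  intro n
  induction n with
  | zero => intro u v i hp hu; cases hp; simpa using hu
  | succ m ih =>
    rintro u v i ⟨w, hs, hp⟩ hu
    have hw := step_part H P hdisj hstep hs hu
    have := ih w v (i + 1) hp hw
    convert this using 2
    push_cast
    rw [add_assoc, add_comm (1 : Fin 4)]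

lemma dist_eq_three (H : DirectedHypergraph V) (P : Fin 4 → Finset V)
    (hPne : ∀ i, (P i).Nonempty)
    (hdisj : ∀ i j : Fin 4, i ≠ j → Disjoint (P i) (P j))
    (hstep : ∀ u v, H.Step u v ↔ ∃ i, u ∈ P i ∧ v ∈ P (i + 1))
    {u v : V} {i : Fin 4} (hu : u ∈ P i) (hv : v ∈ P (i + 3)) :
    H.dist u v = 3 := by
  obtain ⟨a, ha⟩ := hPne (i + 1)
  obtain ⟨b, hb⟩ := hPne (i + 2)
  have s1 : H.Step u a := (hstep u a).2 ⟨i, hu, ha⟩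
  have s2 : H.Step a b := (hstep a b).2 ⟨i + 1, ha, by convert hb using 2; omega⟩
  have s3 : H.Step b v := (hstep b v).2 ⟨i + 2, hb, by convert hv using 2; omega⟩
  have hp3 : H.PathLen 3 u v := ⟨a, s1, b, s2, v, s3, rfl⟩
  apply le_antisymm
  · apply sInf_le
    exact ⟨3, by norm_num, hp3⟩
  · apply le_sInf
    rintro x ⟨m, rfl, hp⟩
    have hvm := pathlen_part H P hdisj hstep m u v i hp hu
    have hm : (m : Fin 4) = 3 := by
      by_contra hne
      have : i + (m : Fin 4) ≠ i + 3 := by omega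
      exact Finset.disjoint_left.1 (hdisj _ _ this) hvm hv
    have hv4 : ((m : Fin 4) : ℕ) = m % 4 := Fin.val_natCast m 4
    have hm' := congrArg Fin.val hm
    have h3 : 3 ≤ m := by simp [hv4] at hm'; omega
    exact_mod_cast h3

end Aux
section Aux2

variable {V : Type} [Fintype V] [DecidableEq V]

lemma muIn_sum (H : DirectedHypergraph V) (A : Finset V) (hA : A.Nonempty)
    (hdIn : ∀ x ∈ A, H.dIn x ≠ 0)
    (htail : ∀ e ∈ H.edges, e.1.Nonempty)
    (hns : ∀ e ∈ H.edges, ∀ x ∈ A, x ∈ e.2 → x ∉ e.1) :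
    ∑ z, H.muIn A z = 1 := by
  have hAc : (A.card : ℝ≥0∞) ≠ 0 := by
    simpa using Finset.card_ne_zero.2 hA
  have key : ∀ x ∈ A, (∑ z,
      (if z = x then (if H.dIn x = 0 then (A.card : ℝ≥0∞)⁻¹ else 0)
       else ∑ e ∈ H.edges.filter (fun e => z ∈ e.1 ∧ x ∈ e.2),
        ((A.card * H.dIn x * e.1.card : ℕ) : ℝ≥0∞)⁻¹)) = (A.card : ℝ≥0∞)⁻¹ := by
    intro x hx
    have hdx : H.dIn x ≠ 0 := hdIn x hx
    have hdxc : ((H.dIn x : ℕ) : ℝ≥0∞) ≠ 0 := by simpa using hdx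
    have step1 : ∀ z : V,
        (if z = x then (if H.dIn x = 0 then (A.card : ℝ≥0∞)⁻¹ else 0)
         else ∑ e ∈ H.edges.filter (fun e => z ∈ e.1 ∧ x ∈ e.2),
          ((A.card * H.dIn x * e.1.card : ℕ) : ℝ≥0∞)⁻¹)
        = ∑ e ∈ H.edges.filter (fun e => x ∈ e.2),
            (if z ∈ e.1 then ((A.card * H.dIn x * e.1.card : ℕ) : ℝ≥0∞)⁻¹ else 0) := by
      intro z
      by_cases hzx : z = x
      · subst hzx
        rw [if_pos rfl, if_neg hdx]
        symm
        apply Finset.sum_eq_zero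
        intro e he
        rw [Finset.mem_filter] at he
        exact if_neg (hns e he.1 z hx he.2)
      · rw [if_neg hzx]
        rw [show (H.edges.filter fun e => z ∈ e.1 ∧ x ∈ e.2)
              = (H.edges.filter fun e => x ∈ e.2).filter (fun e => z ∈ e.1) by
            rw [Finset.filter_filter]; apply Finset.filter_congr; intro a _; tauto]
        exact Finset.sum_filter _ _
    calc (∑ z, (if z = x then (if H.dIn x = 0 then (A.card : ℝ≥0∞)⁻¹ else 0)
         else ∑ e ∈ H.edges.filter (fun e => z ∈ e.1 ∧ x ∈ e.2),
          ((A.card * H.dIn x * e.1.card : ℕ) : ℝ≥0∞)⁻¹))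
        = ∑ z, ∑ e ∈ H.edges.filter (fun e => x ∈ e.2),
            (if z ∈ e.1 then ((A.card * H.dIn x * e.1.card : ℕ) : ℝ≥0∞)⁻¹ else 0) := by
          exact Finset.sum_congr rfl fun z _ => step1 z
      _ = ∑ e ∈ H.edges.filter (fun e => x ∈ e.2), ∑ z,
            (if z ∈ e.1 then ((A.card * H.dIn x * e.1.card : ℕ) : ℝ≥0∞)⁻¹ else 0) :=
          Finset.sum_comm
      _ = ∑ e ∈ H.edges.filter (fun e => x ∈ e.2),
            ((A.card * H.dIn x : ℕ) : ℝ≥0∞)⁻¹ := by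
          apply Finset.sum_congr rfl
          intro e he
          rw [Finset.mem_filter] at he
          have hc0 : ((e.1.card : ℕ) : ℝ≥0∞) ≠ 0 := by
            simpa using Finset.card_ne_zero.2 (htail e he.1)
          rw [Finset.sum_ite_mem, Finset.univ_inter, Finset.sum_const, nsmul_eq_mul,
            show (A.card * H.dIn x * e.1.card : ℕ) = ((A.card * H.dIn x) * e.1.card : ℕ) from rfl,
            Nat.cast_mul,
            ENNReal.mul_inv (Or.inr (ENNReal.natCast_ne_top _)) (Or.inr hc0),
            mul_comm, mul_assoc, ENNReal.inv_mul_cancel hc0 (ENNReal.natCast_ne_top _), mul_one]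
      _ = (H.dIn x : ℝ≥0∞) * ((A.card * H.dIn x : ℕ) : ℝ≥0∞)⁻¹ := by
          rw [Finset.sum_const, nsmul_eq_mul]; rfl
      _ = (A.card : ℝ≥0∞)⁻¹ := by
          rw [Nat.cast_mul,
            ENNReal.mul_inv (Or.inr (ENNReal.natCast_ne_top _)) (Or.inr hdxc),
            mul_comm, mul_assoc, ENNReal.inv_mul_cancel hdxc (ENNReal.natCast_ne_top _), mul_one]
  calc ∑ z, H.muIn A z
      = ∑ x ∈ A, ∑ z : V,
        (if z = x then (if H.dIn x = 0 then (A.card : ℝ≥0∞)⁻¹ else 0)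
         else ∑ e ∈ H.edges.filter (fun e => z ∈ e.1 ∧ x ∈ e.2),
          ((A.card * H.dIn x * e.1.card : ℕ) : ℝ≥0∞)⁻¹) := by
        simp only [DirectedHypergraph.muIn]
        exact Finset.sum_comm
    _ = ∑ x ∈ A, (A.card : ℝ≥0∞)⁻¹ := Finset.sum_congr rfl key
    _ = 1 := by
        rw [Finset.sum_const, nsmul_eq_mul, ENNReal.mul_inv_cancel hAc (ENNReal.natCast_ne_top _)]

lemma muOut_sum (H : DirectedHypergraph V) (B : Finset V) (hB : B.Nonempty)
    (hdOut : ∀ y ∈ B, H.dOut y ≠ 0)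
    (hhead : ∀ e ∈ H.edges, e.2.Nonempty)
    (hns : ∀ e ∈ H.edges, ∀ y ∈ B, y ∈ e.1 → y ∉ e.2) :
    ∑ z, H.muOut B z = 1 := by
  have hBc : (B.card : ℝ≥0∞) ≠ 0 := by
    simpa using Finset.card_ne_zero.2 hB
  have key : ∀ y ∈ B, (∑ z,
      (if z = y then (if H.dOut y = 0 then (B.card : ℝ≥0∞)⁻¹ else 0)
       else ∑ e ∈ H.edges.filter (fun e => y ∈ e.1 ∧ z ∈ e.2),
        ((B.card * H.dOut y * e.2.card : ℕ) : ℝ≥0∞)⁻¹)) = (B.card : ℝ≥0∞)⁻¹ := by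
    intro y hy
    have hdy : H.dOut y ≠ 0 := hdOut y hy
    have hdyc : ((H.dOut y : ℕ) : ℝ≥0∞) ≠ 0 := by simpa using hdy
    have step1 : ∀ z : V,
        (if z = y then (if H.dOut y = 0 then (B.card : ℝ≥0∞)⁻¹ else 0)
         else ∑ e ∈ H.edges.filter (fun e => y ∈ e.1 ∧ z ∈ e.2),
          ((B.card * H.dOut y * e.2.card : ℕ) : ℝ≥0∞)⁻¹)
        = ∑ e ∈ H.edges.filter (fun e => y ∈ e.1),
            (if z ∈ e.2 then ((B.card * H.dOut y * e.2.card : ℕ) : ℝ≥0∞)⁻¹ else 0) := by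
      intro z
      by_cases hzy : z = y
      · subst hzy
        rw [if_pos rfl, if_neg hdy]
        symm
        apply Finset.sum_eq_zero
        intro e he
        rw [Finset.mem_filter] at he
        exact if_neg (hns e he.1 z hy he.2)
      · rw [if_neg hzy]
        rw [show (H.edges.filter fun e => y ∈ e.1 ∧ z ∈ e.2)
              = (H.edges.filter fun e => y ∈ e.1).filter (fun e => z ∈ e.2) by
            rw [Finset.filter_filter]]
        exact Finset.sum_filter _ _
    calc (∑ z, (if z = y then (if H.dOut y = 0 then (B.card : ℝ≥0∞)⁻¹ else 0)
         else ∑ e ∈ H.edges.filter (fun e => y ∈ e.1 ∧ z ∈ e.2),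
          ((B.card * H.dOut y * e.2.card : ℕ) : ℝ≥0∞)⁻¹))
        = ∑ z, ∑ e ∈ H.edges.filter (fun e => y ∈ e.1),
            (if z ∈ e.2 then ((B.card * H.dOut y * e.2.card : ℕ) : ℝ≥0∞)⁻¹ else 0) := by
          exact Finset.sum_congr rfl fun z _ => step1 z
      _ = ∑ e ∈ H.edges.filter (fun e => y ∈ e.1), ∑ z,
            (if z ∈ e.2 then ((B.card * H.dOut y * e.2.card : ℕ) : ℝ≥0∞)⁻¹ else 0) :=
          Finset.sum_comm
      _ = ∑ e ∈ H.edges.filter (fun e => y ∈ e.1),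
            ((B.card * H.dOut y : ℕ) : ℝ≥0∞)⁻¹ := by
          apply Finset.sum_congr rfl
          intro e he
          rw [Finset.mem_filter] at he
          have hc0 : ((e.2.card : ℕ) : ℝ≥0∞) ≠ 0 := by
            simpa using Finset.card_ne_zero.2 (hhead e he.1)
          rw [Finset.sum_ite_mem, Finset.univ_inter, Finset.sum_const, nsmul_eq_mul,
            show (B.card * H.dOut y * e.2.card : ℕ) = ((B.card * H.dOut y) * e.2.card : ℕ) from rfl,
            Nat.cast_mul,
            ENNReal.mul_inv (Or.inr (ENNReal.natCast_ne_top _)) (Or.inr hc0),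
            mul_comm, mul_assoc, ENNReal.inv_mul_cancel hc0 (ENNReal.natCast_ne_top _), mul_one]
      _ = (H.dOut y : ℝ≥0∞) * ((B.card * H.dOut y : ℕ) : ℝ≥0∞)⁻¹ := by
          rw [Finset.sum_const, nsmul_eq_mul]; rfl
      _ = (B.card : ℝ≥0∞)⁻¹ := by
          rw [Nat.cast_mul,
            ENNReal.mul_inv (Or.inr (ENNReal.natCast_ne_top _)) (Or.inr hdyc),
            mul_comm, mul_assoc, ENNReal.inv_mul_cancel hdyc (ENNReal.natCast_ne_top _), mul_one]
  calc ∑ z, H.muOut B z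
      = ∑ y ∈ B, ∑ z : V,
        (if z = y then (if H.dOut y = 0 then (B.card : ℝ≥0∞)⁻¹ else 0)
         else ∑ e ∈ H.edges.filter (fun e => y ∈ e.1 ∧ z ∈ e.2),
          ((B.card * H.dOut y * e.2.card : ℕ) : ℝ≥0∞)⁻¹) := by
        simp only [DirectedHypergraph.muOut]
        exact Finset.sum_comm
    _ = ∑ y ∈ B, (B.card : ℝ≥0∞)⁻¹ := Finset.sum_congr rfl key
    _ = 1 := by
        rw [Finset.sum_const, nsmul_eq_mul, ENNReal.mul_inv_cancel hBc (ENNReal.natCast_ne_top _)]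

lemma muIn_supp (H : DirectedHypergraph V) (A : Finset V)
    (hdIn : ∀ x ∈ A, H.dIn x ≠ 0)
    {z : V} (hz : H.muIn A z ≠ 0) :
    ∃ x ∈ A, H.Step z x := by
  simp only [DirectedHypergraph.muIn] at hz
  obtain ⟨x, hx, hterm⟩ := Finset.exists_ne_zero_of_sum_ne_zero hz
  refine ⟨x, hx, ?_⟩
  by_cases hzx : z = x
  · rw [if_pos hzx, if_neg (hdIn x hx)] at hterm
    exact absurd rfl hterm
  · rw [if_neg hzx] at hterm
    obtain ⟨e, he, -⟩ := Finset.exists_ne_zero_of_sum_ne_zero hterm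
    rw [Finset.mem_filter] at he
    exact ⟨e, he.1, he.2.1, he.2.2⟩

lemma muOut_supp (H : DirectedHypergraph V) (B : Finset V)
    (hdOut : ∀ y ∈ B, H.dOut y ≠ 0)
    {z : V} (hz : H.muOut B z ≠ 0) :
    ∃ y ∈ B, H.Step y z := by
  simp only [DirectedHypergraph.muOut] at hz
  obtain ⟨y, hy, hterm⟩ := Finset.exists_ne_zero_of_sum_ne_zero hz
  refine ⟨y, hy, ?_⟩
  by_cases hzy : z = y
  · rw [if_pos hzy, if_neg (hdOut y hy)] at hterm
    exact absurd rfl hterm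
  · rw [if_neg hzy] at hterm
    obtain ⟨e, he, -⟩ := Finset.exists_ne_zero_of_sum_ne_zero hterm
    rw [Finset.mem_filter] at he
    exact ⟨e, he.1, he.2.1, he.2.2⟩

end Aux2
section Aux3

variable {V : Type} [Fintype V] [DecidableEq V]

lemma W_eq_three (H : DirectedHypergraph V) (μ ν : V → ℝ≥0∞) (S T : Finset V)
    (hμs : ∀ z, μ z ≠ 0 → z ∈ S) (hνs : ∀ z, ν z ≠ 0 → z ∈ T)
    (hμ1 : ∑ z, μ z = 1) (hν1 : ∑ z, ν z = 1)
    (hd : ∀ u ∈ S, ∀ v ∈ T, H.dist u v = 3) : H.W μ ν = 3 := by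
  have hcost : ∀ ε, IsCoupling μ ν ε → H.cost ε = 3 := by
    rintro ε ⟨hl, hr⟩
    have hpt : ∀ u v, H.dist u v * ε u v = 3 * ε u v := by
      intro u v
      by_cases h0 : ε u v = 0
      · rw [h0, mul_zero, mul_zero]
      · have hμu : μ u ≠ 0 := by
          rw [← hl u]
          intro hs
          exact h0 ((Finset.sum_eq_zero_iff.1 hs) v (Finset.mem_univ v))
        have hνv : ν v ≠ 0 := by
          rw [← hr v]
          intro hs
          exact h0 ((Finset.sum_eq_zero_iff.1 hs) u (Finset.mem_univ u))
        rw [hd u (hμs u hμu) v (hνs v hνv)]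
    calc H.cost ε = ∑ u, ∑ v, 3 * ε u v := by
          apply Finset.sum_congr rfl
          intro u _
          exact Finset.sum_congr rfl fun v _ => hpt u v
      _ = 3 * ∑ u, ∑ v, ε u v := by simp_rw [← Finset.mul_sum]
      _ = 3 * ∑ u, μ u := by rw [Finset.sum_congr rfl fun u _ => hl u]
      _ = 3 := by rw [hμ1, mul_one]
  have hc0 : IsCoupling μ ν (fun u v => μ u * ν v) := by
    constructor
    · intro u; rw [← Finset.mul_sum, hν1, mul_one]
    · intro v; rw [← Finset.sum_mul, hμ1, one_mul]
  apply le_antisymm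
  · exact iInf_le_of_le ⟨_, hc0⟩ (hcost _ hc0).le
  · exact le_iInf fun ε => (hcost ε.1 ε.2).ge

lemma cyclic_kappa (H : DirectedHypergraph V) (X Y Z W4 : Finset V)
    (hXne : X.Nonempty) (hYne : Y.Nonempty) (hZne : Z.Nonempty) (hW4ne : W4.Nonempty)
    (hXY : Disjoint X Y) (hXZ : Disjoint X Z) (hXW : Disjoint X W4)
    (hYZ : Disjoint Y Z) (hYW : Disjoint Y W4) (hZW : Disjoint Z W4)
    (hstep : ∀ u v : V, H.Step u v ↔
      (u ∈ X ∧ v ∈ Y) ∨ (u ∈ Y ∧ v ∈ Z) ∨ (u ∈ Z ∧ v ∈ W4) ∨ (u ∈ W4 ∧ v ∈ X))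
    (hne : ∀ e ∈ H.edges, e.1.Nonempty ∧ e.2.Nonempty)
    (e : Finset V × Finset V) (he : e ∈ H.edges)
    (h1 : e.1 ⊆ X) (h2 : e.2 ⊆ Y) : H.kappa e = -2 := by
  set P : Fin 4 → Finset V := ![X, Y, Z, W4] with hP
  have hdisjP : ∀ i j : Fin 4, i ≠ j → Disjoint (P i) (P j) := by
    intro i j hij
    fin_cases i <;> fin_cases j <;>
      first
        | exact absurd rfl hij
        | exact hXY | exact hXY.symm | exact hXZ | exact hXZ.symm
        | exact hXW | exact hXW.symm | exact hYZ | exact hYZ.symm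
        | exact hYW | exact hYW.symm | exact hZW | exact hZW.symm
  have hPne : ∀ i, (P i).Nonempty := by
    intro i
    fin_cases i <;> first | exact hXne | exact hYne | exact hZne | exact hW4ne
  have hstepP : ∀ u v : V, H.Step u v ↔ ∃ i, u ∈ P i ∧ v ∈ P (i + 1) := by
    intro u v
    rw [hstep]
    constructor
    · rintro (⟨ha, hb⟩ | ⟨ha, hb⟩ | ⟨ha, hb⟩ | ⟨ha, hb⟩)
      exacts [⟨0, ha, hb⟩, ⟨1, ha, hb⟩, ⟨2, ha, hb⟩, ⟨3, ha, hb⟩]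
    · rintro ⟨i, ha, hb⟩
      fin_cases i
      · exact Or.inl ⟨ha, hb⟩
      · exact Or.inr (Or.inl ⟨ha, hb⟩)
      · exact Or.inr (Or.inr (Or.inl ⟨ha, hb⟩))
      · exact Or.inr (Or.inr (Or.inr ⟨ha, hb⟩))
  -- degree positivity
  have hdInX : ∀ x ∈ X, H.dIn x ≠ 0 := by
    intro x hx
    obtain ⟨w, hw⟩ := hW4ne
    obtain ⟨e', he', h1', h2'⟩ := (hstep w x).2 (Or.inr (Or.inr (Or.inr ⟨hw, hx⟩)))
    exact Finset.card_ne_zero.2 ⟨e', Finset.mem_filter.2 ⟨he', h2'⟩⟩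
  have hdOutY : ∀ y ∈ Y, H.dOut y ≠ 0 := by
    intro y hy
    obtain ⟨z, hz⟩ := hZne
    obtain ⟨e', he', h1', h2'⟩ := (hstep y z).2 (Or.inr (Or.inl ⟨hy, hz⟩))
    exact Finset.card_ne_zero.2 ⟨e', Finset.mem_filter.2 ⟨he', h1'⟩⟩
  have hnoself : ∀ u : V, ¬ H.Step u u := by
    intro u hs
    rcases (hstep u u).1 hs with ⟨ha, hb⟩ | ⟨ha, hb⟩ | ⟨ha, hb⟩ | ⟨ha, hb⟩
    · exact Finset.disjoint_left.1 hXY ha hb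
    · exact Finset.disjoint_left.1 hYZ ha hb
    · exact Finset.disjoint_left.1 hZW ha hb
    · exact (Finset.disjoint_left.1 hXW hb) ha
  -- support lemmas
  have hμsupp : ∀ z, H.muIn e.1 z ≠ 0 → z ∈ W4 := by
    intro z hz
    obtain ⟨x, hx, hs⟩ := muIn_supp H e.1 (fun x hx => hdInX x (h1 hx)) hz
    rcases (hstep z x).1 hs with ⟨ha, hb⟩ | ⟨ha, hb⟩ | ⟨ha, hb⟩ | ⟨ha, hb⟩
    · exact absurd hb (Finset.disjoint_left.1 hXY (h1 hx))
    · exact absurd hb (Finset.disjoint_left.1 hXZ (h1 hx))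
    · exact absurd hb (Finset.disjoint_left.1 hXW (h1 hx))
    · exact ha
  have hνsupp : ∀ z, H.muOut e.2 z ≠ 0 → z ∈ Z := by
    intro z hz
    obtain ⟨y, hy, hs⟩ := muOut_supp H e.2 (fun y hy => hdOutY y (h2 hy)) hz
    rcases (hstep y z).1 hs with ⟨ha, hb⟩ | ⟨ha, hb⟩ | ⟨ha, hb⟩ | ⟨ha, hb⟩
    · exact absurd ha (Finset.disjoint_left.1 hXY.symm (h2 hy))
    · exact hb
    · exact absurd ha (Finset.disjoint_left.1 hYZ (h2 hy))
    · exact absurd ha (Finset.disjoint_left.1 hYW (h2 hy))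
  -- total masses
  have hμ1 : ∑ z, H.muIn e.1 z = 1 := by
    apply muIn_sum H e.1 (hne e he).1 (fun x hx => hdInX x (h1 hx))
      (fun e' he' => (hne e' he').1)
    intro e' he' x hx hx2 hx1
    exact hnoself x ⟨e', he', hx1, hx2⟩
  have hν1 : ∑ z, H.muOut e.2 z = 1 := by
    apply muOut_sum H e.2 (hne e he).2 (fun y hy => hdOutY y (h2 hy))
      (fun e' he' => (hne e' he').2)
    intro e' he' y hy hy1 hy2
    exact hnoself y ⟨e', he', hy1, hy2⟩
  -- distance
  have hdist : ∀ u ∈ W4, ∀ v ∈ Z, H.dist u v = 3 := by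
    intro u hu v hv
    have h33 : (3 : Fin 4) + 3 = 2 := by decide
    apply dist_eq_three H P hPne hdisjP hstepP (i := 3) hu
    rw [h33]
    exact hv
  have hW : H.W (H.muIn e.1) (H.muOut e.2) = 3 :=
    W_eq_three H _ _ W4 Z hμsupp hνsupp hμ1 hν1 hdist
  rw [DirectedHypergraph.kappa, hW]
  norm_num

end Aux3
lemma dj4 {V : Type} [DecidableEq V] {S T : Finset V} {a : V} {Q : Prop}
    (hd : Disjoint S T) (h1 : a ∈ S) (h2 : a ∈ T) : Q :=
  absurd h2 (Finset.disjoint_left.1 hd h1)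

/-- If the vertex set splits into four nonempty sets with complete cyclic
connections `D → A → B → C → D` and no other connections, then every
hyperedge has curvature `−2`. -/
theorem ricci_minus_two_of_four_partite
    (H : DirectedHypergraph V) (A B C D : Finset V)
    (hA : A.Nonempty) (hB : B.Nonempty) (hC : C.Nonempty) (hD : D.Nonempty)
    (hAB : Disjoint A B) (hAC : Disjoint A C) (hAD : Disjoint A D)
    (hBC : Disjoint B C) (hBD : Disjoint B D) (hCD : Disjoint C D)
    (hcover : A ∪ B ∪ C ∪ D = Finset.univ)
    (hstep : ∀ u v : V, H.Step u v ↔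
      (u ∈ D ∧ v ∈ A) ∨ (u ∈ A ∧ v ∈ B) ∨ (u ∈ B ∧ v ∈ C) ∨ (u ∈ C ∧ v ∈ D))
    (hne : ∀ e ∈ H.edges, e.1.Nonempty ∧ e.2.Nonempty) :
    ∀ e ∈ H.edges, H.kappa e = -2 := by
  intro e he
  obtain ⟨⟨x0, hx0⟩, ⟨y0, hy0⟩⟩ := hne e he
  have hs0 : H.Step x0 y0 := ⟨e, he, hx0, hy0⟩
  have tail_mem : ∀ x ∈ e.1, H.Step x y0 := fun x hx => ⟨e, he, hx, hy0⟩
  have head_mem : ∀ y ∈ e.2, H.Step x0 y := fun y hy => ⟨e, he, hx0, hy⟩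
  rcases (hstep x0 y0).1 hs0 with ⟨hx0', hy0'⟩ | ⟨hx0', hy0'⟩ | ⟨hx0', hy0'⟩ | ⟨hx0', hy0'⟩
  · -- D -> A
    have h1 : e.1 ⊆ D := by
      intro x hx
      rcases (hstep x y0).1 (tail_mem x hx) with ⟨h, h'⟩ | ⟨h, h'⟩ | ⟨h, h'⟩ | ⟨h, h'⟩
      · exact h
      · exact dj4 hAB hy0' h'
      · exact dj4 hAC hy0' h'
      · exact dj4 hAD hy0' h'
    have h2 : e.2 ⊆ A := by
      intro y hy
      rcases (hstep x0 y).1 (head_mem y hy) with ⟨h, h'⟩ | ⟨h, h'⟩ | ⟨h, h'⟩ | ⟨h, h'⟩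
      · exact h'
      · exact dj4 hAD h hx0'
      · exact dj4 hBD h hx0'
      · exact dj4 hCD h hx0'
    exact cyclic_kappa H D A B C hD hA hB hC hAD.symm hBD.symm hCD.symm hAB hAC hBC
      (fun u v => (hstep u v).trans (by tauto)) hne e he h1 h2
  · -- A -> B
    have h1 : e.1 ⊆ A := by
      intro x hx
      rcases (hstep x y0).1 (tail_mem x hx) with ⟨h, h'⟩ | ⟨h, h'⟩ | ⟨h, h'⟩ | ⟨h, h'⟩
      · exact dj4 hAB h' hy0'
      · exact h
      · exact dj4 hBC hy0' h'
      · exact dj4 hBD hy0' h'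
    have h2 : e.2 ⊆ B := by
      intro y hy
      rcases (hstep x0 y).1 (head_mem y hy) with ⟨h, h'⟩ | ⟨h, h'⟩ | ⟨h, h'⟩ | ⟨h, h'⟩
      · exact dj4 hAD hx0' h
      · exact h'
      · exact dj4 hAB hx0' h
      · exact dj4 hAC hx0' h
    exact cyclic_kappa H A B C D hA hB hC hD hAB hAC hAD hBC hBD hCD
      (fun u v => (hstep u v).trans (by tauto)) hne e he h1 h2
  · -- B -> C
    have h1 : e.1 ⊆ B := by
      intro x hx
      rcases (hstep x y0).1 (tail_mem x hx) with ⟨h, h'⟩ | ⟨h, h'⟩ | ⟨h, h'⟩ | ⟨h, h'⟩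
      · exact dj4 hAC h' hy0'
      · exact dj4 hBC h' hy0'
      · exact h
      · exact dj4 hCD hy0' h'
    have h2 : e.2 ⊆ C := by
      intro y hy
      rcases (hstep x0 y).1 (head_mem y hy) with ⟨h, h'⟩ | ⟨h, h'⟩ | ⟨h, h'⟩ | ⟨h, h'⟩
      · exact dj4 hBD hx0' h
      · exact dj4 hAB h hx0'
      · exact h'
      · exact dj4 hBC hx0' h
    exact cyclic_kappa H B C D A hB hC hD hA hBC hBD hAB.symm hCD hAC.symm hAD.symm
      (fun u v => (hstep u v).trans (by tauto)) hne e he h1 h2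
  · -- C -> D
    have h1 : e.1 ⊆ C := by
      intro x hx
      rcases (hstep x y0).1 (tail_mem x hx) with ⟨h, h'⟩ | ⟨h, h'⟩ | ⟨h, h'⟩ | ⟨h, h'⟩
      · exact dj4 hAD h' hy0'
      · exact dj4 hBD h' hy0'
      · exact dj4 hCD h' hy0'
      · exact h
    have h2 : e.2 ⊆ D := by
      intro y hy
      rcases (hstep x0 y).1 (head_mem y hy) with ⟨h, h'⟩ | ⟨h, h'⟩ | ⟨h, h'⟩ | ⟨h, h'⟩
      · exact dj4 hCD hx0' h
      · exact dj4 hAC h hx0'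
      · exact dj4 hBC h hx0'
      · exact h'
    exact cyclic_kappa H C D A B hC hD hA hB hCD hAC.symm hBC.symm hAD.symm hBD.symm hAB
      (fun u v => (hstep u v).trans (by tauto)) hne e he h1 h2
end
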